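/- arXiv:1508.04074 — 2 statements merged into one kernel-verified Lean document; each statement's English description precedes it below -/
import Mathlib

section
/- Let E and F be real Banach lattices and T : E → F a positive bounded linear operator which is ε-minimum preserving. Then for any n ≥ 1 and any x₁, …, x_n in the closed unit ball of E with x_i ≥ 0, ‖T(⋁_{i=1}^n x_i) − ⋁_{i=1}^n (Tx_i)‖ ≤ ε·⌈log₂ n⌉·n. -/
/-!
Split the family into two halves of sizes `⌈n/2⌉` and `⌊n/2⌋`. Since `T(u ⊔ v) - Tu ⊔ Tv` equals the
minimum defect `Tu ⊓ Tv - T(u ⊓ v)`, and `⊔` is `1`-Lipschitz in each variable for a solid norm, the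
error for the whole family is at most the defect at the two partial suprema plus the errors of the
halves. The partial suprema have norm at most `n`, so by homogeneity the defect is at most `εn`;
each of the `⌈log₂ n⌉` levels of the recursion thus costs at most `εn`.
-/

open Finset Filter Topology

section PositiveScalars

variable {E : Type*} [AddCommGroup E] [Lattice E] [IsOrderedAddMonoid E]

lemma nonneg_of_two_pow_nsmul_nonneg {y : E} (k : ℕ) (h : 0 ≤ 2 ^ k • y) : 0 ≤ y := by
  induction k with
  | zero => simpa using h
  | succ k ih => exact ih (nsmul_two_semiclosed (by rwa [← mul_nsmul, ← pow_succ]))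

variable [Module ℝ E] [TopologicalSpace E] [OrderClosedTopology E] [ContinuousSMul ℝ E]

/-- In a lattice-ordered group, `0 ≤ 2 • y` forces `0 ≤ y`, so the positive cone contains every
dyadic multiple `⌊c 2ᵏ⌋₊ / 2ᵏ • x` of a positive `x`; it is closed, hence contains `c • x`. -/
instance PosSMulMono.of_orderClosedTopology : PosSMulMono ℝ E := by
  refine PosSMulMono.of_smul_nonneg fun c hc x hx => ?_
  have hdyadic : Tendsto (fun k : ℕ => (⌊c * 2 ^ k⌋₊ : ℝ) / 2 ^ k) atTop (𝓝 c) :=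
    (tendsto_nat_floor_mul_div_atTop hc).comp
      (tendsto_pow_atTop_atTop_of_one_lt one_lt_two)
  refine ge_of_tendsto' (hdyadic.smul_const x) fun k => nonneg_of_two_pow_nsmul_nonneg k ?_
  rw [← Nat.cast_smul_eq_nsmul ℝ, smul_smul, Nat.cast_pow, Nat.cast_ofNat,
    mul_div_cancel₀ _ (by positivity), Nat.cast_smul_eq_nsmul]
  exact nsmul_nonneg hx _

lemma smul_inf_of_pos {c : ℝ} (hc : 0 < c) (a b : E) : c • (a ⊓ b) = c • a ⊓ c • b :=
  (OrderIso.smulRight hc).map_inf a b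

end PositiveScalars

section LatticeHom

variable {E F : Type*} [AddCommGroup E] [Lattice E] [IsOrderedAddMonoid E]
  [AddCommGroup F] [Lattice F] [IsOrderedAddMonoid F]

lemma map_sup_sub_sup_map {G : Type*} [FunLike G E F] [AddMonoidHomClass G E F] (T : G) (u v : E) :
    T (u ⊔ v) - T u ⊔ T v = T u ⊓ T v - T (u ⊓ v) := by
  have hE : T (u ⊓ v) + T (u ⊔ v) = T u + T v := by rw [← map_add, inf_add_sup, map_add]
  rw [sub_eq_sub_iff_add_eq_add, add_comm, hE, inf_add_sup]

end LatticeHom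

lemma Finset.sup'_eq_sup'_sup_sup'_sdiff {ι α : Type*} [DecidableEq ι] [SemilatticeSup α]
    {s t : Finset ι} (hts : t ⊆ s) (hs : s.Nonempty) (ht : t.Nonempty) (hst : (s \ t).Nonempty)
    (f : ι → α) : s.sup' hs f = t.sup' ht f ⊔ (s \ t).sup' hst f := by
  rw [← sup'_union ht hst]
  exact sup'_congr _ (union_sdiff_of_subset hts).symm fun _ _ => rfl

lemma Finset.sup'_nonneg {ι α : Type*} [SemilatticeSup α] [Zero α] {s : Finset ι}
    (hs : s.Nonempty) {f : ι → α} (hf : ∀ i ∈ s, 0 ≤ f i) : 0 ≤ s.sup' hs f :=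
  let ⟨j, hj⟩ := hs
  (hf j hj).trans (le_sup' f hj)

lemma mul_clog_two_recurrence {ε : ℝ} (hε : 0 ≤ ε) {N : ℕ} (hN : 2 ≤ N) :
    ε * N + (ε * Nat.clog 2 ((N + 1) / 2) * ((N + 1) / 2 : ℕ) +
      ε * Nat.clog 2 (N / 2) * (N / 2 : ℕ)) ≤ ε * Nat.clog 2 N * N := by
  have hclog : Nat.clog 2 (N / 2) ≤ Nat.clog 2 ((N + 1) / 2) := Nat.clog_mono_right _ (by omega)
  have hsum : (((N + 1) / 2 : ℕ) : ℝ) + ((N / 2 : ℕ) : ℝ) = N := by norm_cast; omega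
  calc ε * N + (ε * Nat.clog 2 ((N + 1) / 2) * ((N + 1) / 2 : ℕ) +
        ε * Nat.clog 2 (N / 2) * (N / 2 : ℕ))
      ≤ ε * N + (ε * Nat.clog 2 ((N + 1) / 2) * ((N + 1) / 2 : ℕ) +
          ε * Nat.clog 2 ((N + 1) / 2) * (N / 2 : ℕ)) := by gcongr
    _ = ε * (Nat.clog 2 ((N + 1) / 2) + 1 : ℕ) * N := by push_cast; rw [← hsum]; ring
    _ = ε * Nat.clog 2 N * N := by rw [Nat.clog_of_two_le one_lt_two hN]; rfl

section SolidNorm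

variable {E : Type*} [NormedAddCommGroup E] [Lattice E] [IsOrderedAddMonoid E] [HasSolidNorm E]
  {ι : Type*} {s : Finset ι} (hs : s.Nonempty) {x : ι → E}

lemma norm_sup'_le_sum_norm (hx : ∀ i ∈ s, 0 ≤ x i) : ‖s.sup' hs x‖ ≤ ∑ i ∈ s, ‖x i‖ := by
  have hsup : 0 ≤ s.sup' hs x := sup'_nonneg hs hx
  have hsum : s.sup' hs x ≤ ∑ i ∈ s, x i := sup'_le _ _ fun i hi => single_le_sum hx hi
  calc ‖s.sup' hs x‖ ≤ ‖∑ i ∈ s, x i‖ := by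
        refine norm_le_norm_of_abs_le_abs ?_
        rwa [abs_of_nonneg hsup, abs_of_nonneg (hsup.trans hsum)]
    _ ≤ ∑ i ∈ s, ‖x i‖ := norm_sum_le _ _

lemma norm_sup'_le_card (hx : ∀ i ∈ s, 0 ≤ x i) (hx1 : ∀ i ∈ s, ‖x i‖ ≤ 1) :
    ‖s.sup' hs x‖ ≤ #s :=
  calc ‖s.sup' hs x‖ ≤ ∑ i ∈ s, ‖x i‖ := norm_sup'_le_sum_norm hs hx
    _ ≤ ∑ _i ∈ s, (1 : ℝ) := sum_le_sum hx1
    _ = #s := by simp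

end SolidNorm

section BanachLattice

variable {E F : Type*}
  [NormedAddCommGroup E] [Lattice E] [IsOrderedAddMonoid E] [HasSolidNorm E] [NormedSpace ℝ E]
  [NormedAddCommGroup F] [Lattice F] [IsOrderedAddMonoid F] [HasSolidNorm F] [NormedSpace ℝ F]

variable {ε : ℝ} {T : E →L[ℝ] F}
  (hMP : ∀ x y : E, 0 ≤ x → 0 ≤ y → ‖x‖ ≤ 1 → ‖y‖ ≤ 1 → ‖T x ⊓ T y - T (x ⊓ y)‖ ≤ ε)
include hMP

lemma norm_inf_map_sub_map_inf_le {r : ℝ} (hr : 0 < r) {u v : E} (hu : 0 ≤ u) (hv : 0 ≤ v)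
    (hur : ‖u‖ ≤ r) (hvr : ‖v‖ ≤ r) : ‖T u ⊓ T v - T (u ⊓ v)‖ ≤ ε * r := by
  have hscale : ∀ w : E, ‖w‖ ≤ r → ‖r⁻¹ • w‖ ≤ 1 := fun w hw => by
    rw [norm_smul, Real.norm_of_nonneg (inv_nonneg.2 hr.le), inv_mul_le_one₀ hr]
    exact hw
  have h := hMP _ _ (smul_nonneg (inv_nonneg.2 hr.le) hu) (smul_nonneg (inv_nonneg.2 hr.le) hv)
    (hscale u hur) (hscale v hvr)
  rwa [← smul_inf_of_pos (inv_pos.2 hr), map_smul, map_smul, map_smul,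
    ← smul_inf_of_pos (inv_pos.2 hr), ← smul_sub, norm_smul,
    Real.norm_of_nonneg (inv_nonneg.2 hr.le), inv_mul_le_iff₀ hr, mul_comm] at h

lemma norm_map_sup_sub_sup_le {r : ℝ} (hr : 0 < r) {u v : E} (hu : 0 ≤ u) (hv : 0 ≤ v)
    (hur : ‖u‖ ≤ r) (hvr : ‖v‖ ≤ r) (a b : F) :
    ‖T (u ⊔ v) - a ⊔ b‖ ≤ ε * r + (‖T u - a‖ + ‖T v - b‖) :=
  calc ‖T (u ⊔ v) - a ⊔ b‖ = ‖(T u ⊓ T v - T (u ⊓ v)) + (T u ⊔ T v - a ⊔ b)‖ := by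
        rw [← map_sup_sub_sup_map T, sub_add_sub_cancel]
    _ ≤ ‖T u ⊓ T v - T (u ⊓ v)‖ + ‖T u ⊔ T v - a ⊔ b‖ := norm_add_le _ _
    _ ≤ ε * r + (‖T u - a‖ + ‖T v - b‖) :=
        add_le_add (norm_inf_map_sub_map_inf_le hMP hr hu hv hur hvr)
          (norm_sup_sub_sup_le_add_norm _ _ _ _)

theorem norm_map_sup'_sub_sup'_map_le {ι : Type*} (s : Finset ι) (hs : s.Nonempty) (x : ι → E)
    (hx : ∀ i ∈ s, 0 ≤ x i) (hx1 : ∀ i ∈ s, ‖x i‖ ≤ 1) :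
    ‖T (s.sup' hs x) - s.sup' hs (fun i => T (x i))‖ ≤ ε * Nat.clog 2 #s * #s := by
  classical
  have hε : 0 ≤ ε := (norm_nonneg _).trans (hMP 0 0 le_rfl le_rfl (by simp) (by simp))
  induction s using Finset.strongInduction with
  | H s ih =>
  obtain ⟨i, rfl⟩ | hN : (∃ i, s = {i}) ∨ 2 ≤ #s := by
    by_cases h : #s = 1
    · exact .inl (card_eq_one.1 h)
    · exact .inr (by have := hs.card_pos; omega)
  · simp
  set N := #s
  obtain ⟨t, hts, htc⟩ := exists_subset_card_eq (show (N + 1) / 2 ≤ N by omega)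
  have hstc : #(s \ t) = N / 2 := by rw [card_sdiff_of_subset hts]; omega
  have ht : t.Nonempty := card_pos.1 (by omega)
  have hst : (s \ t).Nonempty := card_pos.1 (by omega)
  have hpartial : ∀ w ⊆ s, ∀ hw : w.Nonempty, 0 ≤ w.sup' hw x ∧ ‖w.sup' hw x‖ ≤ N := fun w hws hw =>
    ⟨sup'_nonneg hw fun i hi => hx i (hws hi),
      (norm_sup'_le_card hw (fun i hi => hx i (hws hi)) (fun i hi => hx1 i (hws hi))).trans
        (by exact_mod_cast card_le_card hws)⟩
  have ih_t := ih t (ssubset_of_subset_of_ne hts (by rintro rfl; omega)) ht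
    (fun i hi => hx i (hts hi)) (fun i hi => hx1 i (hts hi))
  have ih_st := ih (s \ t) (sdiff_ssubset hts ht) hst
    (fun i hi => hx i (sdiff_subset hi)) (fun i hi => hx1 i (sdiff_subset hi))
  rw [htc] at ih_t
  rw [hstc] at ih_st
  rw [sup'_eq_sup'_sup_sup'_sdiff hts hs ht hst, sup'_eq_sup'_sup_sup'_sdiff hts hs ht hst]
  calc _ ≤ ε * N + (‖T (t.sup' ht x) - t.sup' ht fun i => T (x i)‖ +
        ‖T ((s \ t).sup' hst x) - (s \ t).sup' hst fun i => T (x i)‖) :=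
        norm_map_sup_sub_sup_le hMP (by positivity) (hpartial t hts ht).1
          (hpartial _ sdiff_subset hst).1 (hpartial t hts ht).2 (hpartial _ sdiff_subset hst).2 _ _
    _ ≤ _ := add_le_add_right (add_le_add ih_t ih_st) _
    _ ≤ ε * Nat.clog 2 N * N := mul_clog_two_recurrence hε hN

end BanachLattice

theorem stmt18_general (E F : Type*)
    [NormedAddCommGroup E] [Lattice E] [IsOrderedAddMonoid E] [HasSolidNorm E] [NormedSpace ℝ E]
    [NormedAddCommGroup F] [Lattice F] [IsOrderedAddMonoid F] [HasSolidNorm F] [NormedSpace ℝ F]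
    (ε : ℝ) (T : E →L[ℝ] F)
    (hMP : ∀ x y : E, 0 ≤ x → 0 ≤ y → ‖x‖ ≤ 1 → ‖y‖ ≤ 1 → ‖T x ⊓ T y - T (x ⊓ y)‖ ≤ ε)
    (n : ℕ) (hn : 1 ≤ n) (x : Fin n → E) (hx : ∀ i, 0 ≤ x i) (hx1 : ∀ i, ‖x i‖ ≤ 1) :
    ‖T ((univ : Finset (Fin n)).sup' (univ_nonempty_iff.2 (Fin.pos_iff_nonempty.1 hn)) x) -
        (univ : Finset (Fin n)).sup' (univ_nonempty_iff.2 (Fin.pos_iff_nonempty.1 hn))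
          (fun i => T (x i))‖ ≤
      ε * (⌈Real.logb 2 n⌉ : ℝ) * n := by
  have hceil : ⌈Real.logb 2 n⌉ = Nat.clog 2 n := by
    have := Real.ceil_logb_natCast (b := 2) (Nat.cast_nonneg (α := ℝ) n)
    rwa [Nat.cast_ofNat, Int.clog_natCast] at this
  simpa [hceil] using
    norm_map_sup'_sub_sup'_map_le hMP univ _ x (fun i _ => hx i) (fun i _ => hx1 i)

/-- If `T` is a positive `ε`-minimum preserving operator, then for any
`x₁, …, x_n` in the positive part of the closed unit ball,
`‖T(⋁ x_i) - ⋁ Tx_i‖ ≤ ε ⌈log₂ n⌉ n`. -/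
theorem stmt18 (E F : Type*)
    [NormedAddCommGroup E] [Lattice E] [IsOrderedAddMonoid E] [HasSolidNorm E] [NormedSpace ℝ E] [CompleteSpace E]
    [NormedAddCommGroup F] [Lattice F] [IsOrderedAddMonoid F] [HasSolidNorm F] [NormedSpace ℝ F] [CompleteSpace F]
    (ε : ℝ) (hε : 0 ≤ ε) (T : E →L[ℝ] F)
    (hpos : ∀ x : E, 0 ≤ x → 0 ≤ T x)
    (hMP : ∀ x y : E, 0 ≤ x → 0 ≤ y → ‖x‖ ≤ 1 → ‖y‖ ≤ 1 → ‖T x ⊓ T y - T (x ⊓ y)‖ ≤ ε)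
    (n : ℕ) (hn : 1 ≤ n) (x : Fin n → E) (hx : ∀ i, 0 ≤ x i) (hx1 : ∀ i, ‖x i‖ ≤ 1) :
    ‖T ((univ : Finset (Fin n)).sup' (univ_nonempty_iff.2 (Fin.pos_iff_nonempty.1 hn)) x) -
        (univ : Finset (Fin n)).sup' (univ_nonempty_iff.2 (Fin.pos_iff_nonempty.1 hn))
          (fun i => T (x i))‖ ≤
      ε * (⌈Real.logb 2 n⌉ : ℝ) * n :=
  stmt18_general E F ε T hMP n hn x hx hx1
end

section
/- Let E be a finite-dimensional real Banach lattice, F a real Banach lattice, and T : E → F a positive bounded linear operator which is ε-strongly disjointness preserving. Then there exists a disjointness preserving linear operator S : E → F such that 0 ≤ S ≤ T and ‖T − S‖ ≤ 2ε. -/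
/-!
A finite-dimensional Banach lattice has a basis `(eᵢ)` of pairwise disjoint positive unit
vectors: a disjoint system of maximal length consists of discrete elements and spans.
Put `aᵢ = T eᵢ` and `bᵢ = ∑_{j ≠ i} aⱼ`, and let `S eᵢ = (aᵢ - bᵢ)⁺`. These images are pairwise
disjoint, so `S` preserves disjointness, and `(T - S) eᵢ = aᵢ ⊓ bᵢ ≥ 0`, so `0 ≤ S ≤ T`.
Since the `eᵢ` are disjoint unit vectors, `‖T - S‖ ≤ ‖∑ᵢ aᵢ ⊓ bᵢ‖`, and
`∑ᵢ aᵢ ⊓ bᵢ ≤ 2 (∑ᵢ aᵢ - ⋁ᵢ aᵢ)`, whose norm is at most `2ε` by `ε`-SDP applied to `(eᵢ)`.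
-/

open Finset Filter Topology

section LatticeOrderedAddCommGroup

lemma nonneg_of_inf_eq_zero_left {α : Type*} [Lattice α] [Zero α] {x y : α} (h : x ⊓ y = 0) :
    0 ≤ x :=
  h ▸ inf_le_left

lemma nonneg_of_inf_eq_zero_right {α : Type*} [Lattice α] [Zero α] {x y : α} (h : x ⊓ y = 0) :
    0 ≤ y :=
  h ▸ inf_le_right

variable {α : Type*} [AddCommGroup α] [Lattice α] [IsOrderedAddMonoid α]

lemma add_inf_le_inf_add_inf {a b c : α} (ha : 0 ≤ a) (hb : 0 ≤ b) (hc : 0 ≤ c) :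
    (a + b) ⊓ c ≤ a ⊓ c + b ⊓ c := by
  rw [inf_add, add_inf, add_inf]
  exact le_inf (le_inf inf_le_left (inf_le_right.trans (le_add_of_nonneg_left ha)))
    (le_inf (inf_le_right.trans (le_add_of_nonneg_right hb))
      (inf_le_right.trans (le_add_of_nonneg_left hc)))

lemma sum_inf_eq_zero {ι : Type*} {s : Finset ι} {a : ι → α} {c : α} (hc : 0 ≤ c)
    (h : ∀ i ∈ s, a i ⊓ c = 0) : (∑ i ∈ s, a i) ⊓ c = 0 := by
  induction s using Finset.cons_induction with
  | empty => simpa using hc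
  | cons i s his ih =>
    rw [Finset.forall_mem_cons] at h
    have ha := nonneg_of_inf_eq_zero_left h.1
    have hs := sum_nonneg fun j hj ↦ nonneg_of_inf_eq_zero_left (h.2 j hj)
    rw [sum_cons]
    refine le_antisymm ?_ (le_inf (add_nonneg ha hs) hc)
    simpa [h.1, ih h.2] using add_inf_le_inf_add_inf ha hs hc

lemma sum_inf_sum_eq_zero {ι κ : Type*} {s : Finset ι} {t : Finset κ} {a : ι → α} {b : κ → α}
    (ha : ∀ i ∈ s, 0 ≤ a i) (hb : ∀ j ∈ t, 0 ≤ b j) (h : ∀ i ∈ s, ∀ j ∈ t, a i ⊓ b j = 0) :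
    (∑ i ∈ s, a i) ⊓ ∑ j ∈ t, b j = 0 :=
  sum_inf_eq_zero (sum_nonneg hb) fun i hi ↦ by
    rw [inf_comm]
    exact sum_inf_eq_zero (ha i hi) fun j hj ↦ by rw [inf_comm]; exact h i hi j hj

lemma abs_sub_eq_add_of_inf_eq_zero {u v : α} (h : u ⊓ v = 0) : |u - v| = u + v := by
  rw [← abs_sub_comm, ← sup_sub_inf_eq_abs_sub, h, sub_zero, ← zero_add (u ⊔ v), ← h,
    inf_add_sup]

lemma abs_sum_le_sum_abs' {ι : Type*} (s : Finset ι) (f : ι → α) :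
    |∑ i ∈ s, f i| ≤ ∑ i ∈ s, |f i| := by
  induction s using Finset.cons_induction with
  | empty => simp
  | cons i s his ih =>
    rw [sum_cons, sum_cons]
    exact (abs_add_le _ _).trans (add_le_add_right ih _)

lemma posPart_sub_inf_posPart_sub_eq_zero {a b c d : α} (hcb : c ≤ b) (had : a ≤ d) :
    (a - b)⁺ ⊓ (c - d)⁺ = 0 := by
  refine le_antisymm ?_ (le_inf (posPart_nonneg _) (posPart_nonneg _))
  calc (a - b)⁺ ⊓ (c - d)⁺ ≤ (a - c)⁺ ⊓ (a - c)⁻ := by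
        rw [negPart_def, neg_sub]
        exact inf_le_inf (posPart_mono (sub_le_sub_left hcb a))
          (posPart_mono (sub_le_sub_left had c))
    _ = 0 := posPart_inf_negPart_eq_zero _

lemma pairwise_posPart_sub_sum_erase_inf_eq_zero {ι : Type*} [Fintype ι] [DecidableEq ι]
    {a : ι → α} (ha : ∀ i, 0 ≤ a i) :
    Pairwise fun i j ↦ (a i - ∑ k ∈ univ.erase i, a k)⁺ ⊓ (a j - ∑ k ∈ univ.erase j, a k)⁺ = 0 :=
  fun i j hij ↦ posPart_sub_inf_posPart_sub_eq_zero
    (single_le_sum (fun k _ ↦ ha k) (mem_erase.2 ⟨hij.symm, mem_univ j⟩))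
    (single_le_sum (fun k _ ↦ ha k) (mem_erase.2 ⟨hij, mem_univ i⟩))

/-- With `A = ∑ aᵢ` and `D` the left-hand side, it suffices that `D + aₖ + aₗ ≤ 2 • A` for all
`k, l`: for `k = l`, bound the `k`-th term of `D` by `A - aₖ` and the others by `aᵢ`; for `k ≠ l`,
use `D ≤ A` and `aₖ + aₗ ≤ A`. -/
lemma sum_inf_sum_erase_le_two_nsmul {ι : Type*} [DecidableEq ι] (s : Finset ι)
    (hs : s.Nonempty) (a : ι → α) (ha : ∀ i ∈ s, 0 ≤ a i) :
    ∑ i ∈ s, a i ⊓ ∑ j ∈ s.erase i, a j ≤ 2 • (∑ i ∈ s, a i - s.sup' hs a) := by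
  set A := ∑ i ∈ s, a i
  set D := ∑ i ∈ s, a i ⊓ ∑ j ∈ s.erase i, a j
  have hDA : D ≤ A := sum_le_sum fun i _ ↦ inf_le_left
  have hpair : ∀ k ∈ s, ∀ l ∈ s, D + a k + a l ≤ A + A := by
    intro k hk l hl
    have hAk : a k + ∑ j ∈ s.erase k, a j = A := add_sum_erase s a hk
    rcases eq_or_ne k l with rfl | hkl
    · have hD : D ≤ ∑ j ∈ s.erase k, a j + ∑ j ∈ s.erase k, a j :=
        calc D = a k ⊓ ∑ j ∈ s.erase k, a j + ∑ i ∈ s.erase k, a i ⊓ ∑ j ∈ s.erase i, a j :=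
              (add_sum_erase s _ hk).symm
          _ ≤ _ := add_le_add inf_le_right (sum_le_sum fun i _ ↦ inf_le_left)
      calc D + a k + a k ≤ (∑ j ∈ s.erase k, a j + ∑ j ∈ s.erase k, a j) + a k + a k := by
            gcongr
        _ = A + A := by rw [← hAk]; abel
    · have : a k + a l ≤ A := hAk ▸ add_le_add le_rfl (single_le_sum
        (fun j hj ↦ ha j (mem_of_mem_erase hj)) (mem_erase.2 ⟨hkl.symm, hl⟩))
      calc D + a k + a l = D + (a k + a l) := add_assoc _ _ _
        _ ≤ A + A := add_le_add hDA this
  set V := s.sup' hs a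
  have hV : V + V ≤ A + A - D := by
    rw [← le_sub_iff_add_le]
    refine sup'_le hs _ fun k hk ↦ ?_
    rw [le_sub_comm]
    refine sup'_le hs _ fun l hl ↦ ?_
    rw [le_sub_iff_add_le, le_sub_iff_add_le']
    calc D + (a l + a k) = D + a k + a l := by abel
      _ ≤ A + A := hpair k hk l hl
  calc D = A + A - (A + A - D) := by abel
    _ ≤ A + A - (V + V) := sub_le_sub_left hV _
    _ = 2 • (A - V) := by abel

end LatticeOrderedAddCommGroup

/-- `0 ≤ t • x` for dyadic `t ≥ 0` because `0 ≤ 2 • a → 0 ≤ a` in a lattice-ordered group, and then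
for all `t ≥ 0` because the positive cone is closed. -/
instance HasSolidNorm.isOrderedModule {E : Type*} [NormedAddCommGroup E] [Lattice E]
    [HasSolidNorm E] [IsOrderedAddMonoid E] [NormedSpace ℝ E] : IsOrderedModule ℝ E := by
  refine IsOrderedModule.of_smul_nonneg fun c hc x hx ↦ ?_
  have hdyadic : ∀ k m : ℕ, 0 ≤ ((m : ℝ) / 2 ^ k) • x := by
    intro k
    induction k with
    | zero => intro m; simpa [Nat.cast_smul_eq_nsmul] using nsmul_nonneg hx m
    | succ k ih =>
      intro m
      refine nsmul_two_semiclosed ?_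
      have hhalf : (m : ℝ) / 2 ^ (k + 1) + m / 2 ^ (k + 1) = m / 2 ^ k := by
        rw [pow_succ]; ring
      rw [two_nsmul, ← add_smul, hhalf]
      exact ih m
  have hlim : Tendsto (fun k : ℕ ↦ ((⌊c * 2 ^ k⌋₊ : ℝ) / 2 ^ k) • x) atTop (𝓝 (c • x)) :=
    ((tendsto_nat_floor_mul_div_atTop hc).comp
      (tendsto_pow_atTop_atTop_of_one_lt one_lt_two)).smul_const x
  exact isClosed_nonneg.mem_of_tendsto hlim (Eventually.of_forall fun k ↦ hdyadic k _)

section VectorLattice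

variable {E : Type*} [AddCommGroup E] [Lattice E] [Module ℝ E]

lemma smul_inf_of_nonneg [PosSMulMono ℝ E] {c : ℝ} (hc : 0 ≤ c) (x y : E) :
    c • (x ⊓ y) = c • x ⊓ c • y := by
  rcases hc.eq_or_lt with rfl | hc
  · simp
  · exact (OrderIso.smulRight hc).map_inf x y

lemma smul_sup_of_nonneg [PosSMulMono ℝ E] {c : ℝ} (hc : 0 ≤ c) (x y : E) :
    c • (x ⊔ y) = c • x ⊔ c • y := by
  rcases hc.eq_or_lt with rfl | hc
  · simp
  · exact (OrderIso.smulRight hc).map_sup x y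

lemma abs_smul_eq_abs_smul_abs [PosSMulMono ℝ E] (c : ℝ) (x : E) : |c • x| = |c| • |x| := by
  have key : ∀ c : ℝ, 0 ≤ c → |c • x| = c • |x| := fun c hc ↦ by
    rw [abs, abs, smul_sup_of_nonneg hc, smul_neg]
  rcases le_total 0 c with hc | hc
  · rw [key c hc, abs_of_nonneg hc]
  · rw [← abs_neg, ← neg_smul, key (-c) (neg_nonneg.2 hc), abs_of_nonpos hc]

variable [IsOrderedAddMonoid E] [IsOrderedModule ℝ E]

lemma smul_inf_smul_eq_zero {x y : E} (h : x ⊓ y = 0) {r t : ℝ} (hr : 0 ≤ r) (ht : 0 ≤ t) :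
    r • x ⊓ t • y = 0 := by
  have hx := nonneg_of_inf_eq_zero_left h
  have hy := nonneg_of_inf_eq_zero_right h
  refine le_antisymm ?_ (le_inf (smul_nonneg hr hx) (smul_nonneg ht hy))
  calc r • x ⊓ t • y ≤ (r + t) • x ⊓ (r + t) • y :=
        inf_le_inf (smul_le_smul_of_nonneg_right (le_add_of_nonneg_right ht) hx)
          (smul_le_smul_of_nonneg_right (le_add_of_nonneg_left hr) hy)
    _ = 0 := by rw [← smul_inf_of_nonneg (add_nonneg hr ht), h, smul_zero]

variable {ι : Type*} [Fintype ι] {e : ι → E}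

lemma sum_smul_inf_sum_smul_eq_zero (he : ∀ i, 0 ≤ e i)
    (hed : Pairwise fun i j ↦ e i ⊓ e j = 0) {c d : ι → ℝ} (hc : ∀ i, 0 ≤ c i) (hd : ∀ i, 0 ≤ d i)
    (hcd : ∀ i, c i = 0 ∨ d i = 0) : (∑ i, c i • e i) ⊓ ∑ i, d i • e i = 0 := by
  refine sum_inf_sum_eq_zero (fun i _ ↦ smul_nonneg (hc i) (he i))
    (fun i _ ↦ smul_nonneg (hd i) (he i)) fun i _ j _ ↦ ?_
  rcases eq_or_ne i j with rfl | hij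
  · rcases hcd i with h | h <;> simp [h, smul_nonneg, hc, hd, he]
  · exact smul_inf_smul_eq_zero (hed hij) (hc i) (hd j)

lemma abs_sum_smul_of_pairwise_inf_eq_zero (he : ∀ i, 0 ≤ e i)
    (hed : Pairwise fun i j ↦ e i ⊓ e j = 0) (c : ι → ℝ) :
    |∑ i, c i • e i| = ∑ i, |c i| • e i := by
  have hsplit : ∑ i, c i • e i = ∑ i, (c i)⁺ • e i - ∑ i, (c i)⁻ • e i := by
    simp_rw [← sum_sub_distrib, ← sub_smul, posPart_sub_negPart]
  have hdisj := sum_smul_inf_sum_smul_eq_zero he hed (fun i ↦ posPart_nonneg (c i))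
    (fun i ↦ negPart_nonneg (c i)) fun i ↦ by
      rcases le_total (c i) 0 with h | h
      · exact .inl (posPart_eq_zero.2 h)
      · exact .inr (negPart_eq_zero.2 h)
  rw [hsplit, abs_sub_eq_add_of_inf_eq_zero hdisj, ← sum_add_distrib]
  simp_rw [← add_smul, posPart_add_negPart]

lemma linearIndependent_of_pairwise_inf_eq_zero (he : ∀ i, 0 < e i)
    (hed : Pairwise fun i j ↦ e i ⊓ e j = 0) : LinearIndependent ℝ e := by
  refine Fintype.linearIndependent_iff.2 fun c hc i ↦ ?_
  have hsum : ∑ j, |c j| • e j = 0 := by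
    rw [← abs_sum_smul_of_pairwise_inf_eq_zero (fun j ↦ (he j).le) hed, hc, abs_zero]
  have := (sum_eq_zero_iff_of_nonneg fun j _ ↦ smul_nonneg (abs_nonneg (c j)) (he j).le).1
    hsum i (mem_univ i)
  simpa [(he i).ne'] using this

end VectorLattice

lemma HasSolidNorm.norm_le_norm_of_nonneg_of_le {α : Type*} [NormedAddCommGroup α] [Lattice α]
    [HasSolidNorm α] [IsOrderedAddMonoid α] {a b : α} (ha : 0 ≤ a) (hab : a ≤ b) : ‖a‖ ≤ ‖b‖ :=
  norm_le_norm_of_abs_le_abs (by rwa [abs_of_nonneg ha, abs_of_nonneg (ha.trans hab)])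

namespace Module.Basis

lemma map_eq_sum_repr_smul {R E F G ι : Type*} [Semiring R] [AddCommMonoid E] [Module R E]
    [AddCommMonoid F] [Module R F] [FunLike G E F] [LinearMapClass G R E F] [Fintype ι]
    (B : Basis ι R E) (L : G) (x : E) :
    L x = ∑ i, B.repr x i • L (B i) := by
  conv_lhs => rw [← B.sum_repr x]
  simp only [map_sum, map_smul]

variable {E : Type*} [AddCommGroup E] [Lattice E] [IsOrderedAddMonoid E] [Module ℝ E]
  [IsOrderedModule ℝ E] {ι : Type*} [Fintype ι] (B : Basis ι ℝ E)

lemma abs_eq_sum_abs_repr_smul (hB0 : ∀ i, 0 ≤ B i) (hBd : Pairwise fun i j ↦ B i ⊓ B j = 0)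
    (x : E) : |x| = ∑ i, |B.repr x i| • B i := by
  conv_lhs => rw [← B.sum_repr x]
  exact abs_sum_smul_of_pairwise_inf_eq_zero hB0 hBd _

lemma repr_nonneg (hB0 : ∀ i, 0 ≤ B i) (hBd : Pairwise fun i j ↦ B i ⊓ B j = 0) {x : E}
    (hx : 0 ≤ x) (i : ι) : 0 ≤ B.repr x i := by
  have h := congrArg (fun y ↦ B.repr y i) (B.abs_eq_sum_abs_repr_smul hB0 hBd x)
  simp only [abs_of_nonneg hx, repr_sum_self] at h
  exact h ▸ abs_nonneg _

lemma abs_repr_smul_le_abs (hB0 : ∀ i, 0 ≤ B i) (hBd : Pairwise fun i j ↦ B i ⊓ B j = 0)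
    (x : E) (i : ι) : |B.repr x i| • B i ≤ |x| := by
  rw [B.abs_eq_sum_abs_repr_smul hB0 hBd x]
  exact single_le_sum (fun j _ ↦ smul_nonneg (abs_nonneg _) (hB0 j)) (mem_univ i)

lemma repr_eq_zero_or_repr_eq_zero (hB0 : ∀ i, 0 ≤ B i)
    (hBd : Pairwise fun i j ↦ B i ⊓ B j = 0) {x y : E} (hxy : |x| ⊓ |y| = 0) (i : ι) :
    B.repr x i = 0 ∨ B.repr y i = 0 := by
  have hmin : min |B.repr x i| |B.repr y i| • B i = 0 := by
    refine le_antisymm (hxy ▸ le_inf ?_ ?_)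
      (smul_nonneg (le_min (abs_nonneg _) (abs_nonneg _)) (hB0 i))
    · exact (smul_le_smul_of_nonneg_right (min_le_left _ _) (hB0 i)).trans
        (B.abs_repr_smul_le_abs hB0 hBd x i)
    · exact (smul_le_smul_of_nonneg_right (min_le_right _ _) (hB0 i)).trans
        (B.abs_repr_smul_le_abs hB0 hBd y i)
  rcases smul_eq_zero.1 hmin with h | h
  · rcases min_choice |B.repr x i| |B.repr y i| with h' | h' <;> rw [h'] at h <;> simp_all
  · exact absurd h (B.ne_zero i)

variable {F G : Type*} [AddCommGroup F] [Lattice F] [IsOrderedAddMonoid F] [Module ℝ F]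
  [IsOrderedModule ℝ F] [FunLike G E F] [LinearMapClass G ℝ E F]

lemma map_nonneg (hB0 : ∀ i, 0 ≤ B i) (hBd : Pairwise fun i j ↦ B i ⊓ B j = 0)
    (L : G) (hL : ∀ i, 0 ≤ L (B i)) {x : E} (hx : 0 ≤ x) : 0 ≤ L x := by
  rw [B.map_eq_sum_repr_smul L x]
  exact sum_nonneg fun i _ ↦ smul_nonneg (B.repr_nonneg hB0 hBd hx i) (hL i)

lemma abs_map_inf_abs_map_eq_zero (hB0 : ∀ i, 0 ≤ B i)
    (hBd : Pairwise fun i j ↦ B i ⊓ B j = 0) (L : G) (hL0 : ∀ i, 0 ≤ L (B i))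
    (hLd : Pairwise fun i j ↦ L (B i) ⊓ L (B j) = 0) {x y : E} (hxy : |x| ⊓ |y| = 0) :
    |L x| ⊓ |L y| = 0 := by
  rw [B.map_eq_sum_repr_smul L x, B.map_eq_sum_repr_smul L y,
    abs_sum_smul_of_pairwise_inf_eq_zero hL0 hLd, abs_sum_smul_of_pairwise_inf_eq_zero hL0 hLd]
  exact sum_smul_inf_sum_smul_eq_zero hL0 hLd (fun i ↦ abs_nonneg _) (fun i ↦ abs_nonneg _)
    fun i ↦ by simpa using B.repr_eq_zero_or_repr_eq_zero hB0 hBd hxy i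

end Module.Basis

namespace Module.Basis

variable {E F : Type*} [NormedAddCommGroup E] [Lattice E] [HasSolidNorm E] [IsOrderedAddMonoid E]
  [NormedSpace ℝ E] [NormedAddCommGroup F] [Lattice F] [HasSolidNorm F] [IsOrderedAddMonoid F]
  [NormedSpace ℝ F] {ι : Type*} [Fintype ι] (B : Basis ι ℝ E)

lemma abs_repr_le_norm (hB0 : ∀ i, 0 ≤ B i) (hBd : Pairwise fun i j ↦ B i ⊓ B j = 0)
    (hB1 : ∀ i, ‖B i‖ = 1) (x : E) (i : ι) : |B.repr x i| ≤ ‖x‖ := by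
  have h := HasSolidNorm.norm_le_norm_of_nonneg_of_le (smul_nonneg (abs_nonneg _) (hB0 i))
    (B.abs_repr_smul_le_abs hB0 hBd x i)
  rwa [_root_.norm_smul, Real.norm_eq_abs, abs_abs, hB1, mul_one, norm_abs_eq_norm] at h

lemma opNorm_le_norm_sum_abs_apply (hB0 : ∀ i, 0 ≤ B i)
    (hBd : Pairwise fun i j ↦ B i ⊓ B j = 0) (hB1 : ∀ i, ‖B i‖ = 1) (L : E →L[ℝ] F) :
    ‖L‖ ≤ ‖∑ i, |L (B i)|‖ := by
  refine L.opNorm_le_bound (norm_nonneg _) fun x ↦ ?_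
  have h : |L x| ≤ ‖x‖ • ∑ i, |L (B i)| :=
    calc |L x| ≤ ∑ i, |B.repr x i • L (B i)| :=
          B.map_eq_sum_repr_smul L x ▸ abs_sum_le_sum_abs' _ _
      _ = ∑ i, |B.repr x i| • |L (B i)| := by simp_rw [abs_smul_eq_abs_smul_abs]
      _ ≤ ∑ i, ‖x‖ • |L (B i)| := sum_le_sum fun i _ ↦
          smul_le_smul_of_nonneg_right (B.abs_repr_le_norm hB0 hBd hB1 x i) (abs_nonneg _)
      _ = ‖x‖ • ∑ i, |L (B i)| := (smul_sum ..).symm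
  calc ‖L x‖ = ‖|L x|‖ := (norm_abs_eq_norm _).symm
    _ ≤ ‖‖x‖ • ∑ i, |L (B i)|‖ := HasSolidNorm.norm_le_norm_of_nonneg_of_le (abs_nonneg _) h
    _ = ‖∑ i, |L (B i)|‖ * ‖x‖ := by rw [_root_.norm_smul, norm_norm, mul_comm]

end Module.Basis

section DisjointSystem

def IsDiscreteElement {E : Type*} [Zero E] [Preorder E] [SMul ℝ E] (e : E) : Prop :=
  0 < e ∧ ∀ y, 0 ≤ y → y ≤ e → ∃ t : ℝ, y = t • e

def IsDisjointSystem {E ι : Type*} [Zero E] [Lattice E] (e : ι → E) : Prop :=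
  (∀ i, 0 < e i) ∧ Pairwise fun i j ↦ e i ⊓ e j = 0

lemma IsDisjointSystem.of_le {E ι : Type*} [Zero E] [Lattice E] {e f : ι → E}
    (he : IsDisjointSystem e) (hf : ∀ i, 0 < f i) (hfe : ∀ i, f i ≤ e i) : IsDisjointSystem f :=
  ⟨hf, fun i j hij ↦ le_antisymm ((inf_le_inf (hfe i) (hfe j)).trans_eq (he.2 hij))
    (le_inf (hf i).le (hf j).le)⟩

lemma IsDisjointSystem.cons {E : Type*} [Zero E] [Lattice E] {n : ℕ} {e : Fin n → E}
    (he : IsDisjointSystem e) {w : E} (hw : 0 < w) (hwe : ∀ i, w ⊓ e i = 0) :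
    IsDisjointSystem (Fin.cons w e : Fin (n + 1) → E) := by
  refine ⟨Fin.cases hw he.1, fun i j hij ↦ ?_⟩
  induction i using Fin.cases <;> induction j using Fin.cases
  · exact absurd rfl hij
  · exact hwe _
  · simpa [inf_comm] using hwe _
  · exact he.2 fun h ↦ hij (congrArg Fin.succ h)

lemma IsDisjointSystem.eq_zero_of_maximal {E : Type*} [Zero E] [Lattice E] {n : ℕ}
    {e : Fin n → E} (he : IsDisjointSystem e)
    (hmax : ∀ e' : Fin (n + 1) → E, ¬IsDisjointSystem e') {w : E} (hw : 0 ≤ w)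
    (hwe : ∀ i, w ⊓ e i = 0) : w = 0 :=
  by_contra fun hne ↦ hmax _ (he.cons (hw.lt_of_ne (Ne.symm hne)) hwe)

variable {E : Type*} [AddCommGroup E] [Lattice E] [IsOrderedAddMonoid E] [Module ℝ E]
  [IsOrderedModule ℝ E]

/-- If `y ∈ [0, x]` is not a multiple of `x`, then for some `t ∈ [0, 1]` neither `y ≤ t • x` nor
`t • x ≤ y`, as `[0, 1]` is connected; the positive and negative parts of `y - t • x` split `x`. -/
lemma exists_pos_inf_eq_zero_of_not_isDiscreteElement [TopologicalSpace E]
    [OrderClosedTopology E] [ContinuousSMul ℝ E] {x : E} (hx : 0 < x)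
    (h : ¬IsDiscreteElement x) : ∃ u v : E, 0 < u ∧ 0 < v ∧ u ≤ x ∧ v ≤ x ∧ u ⊓ v = 0 := by
  obtain ⟨y, hy0, hyx, hy⟩ : ∃ y, 0 ≤ y ∧ y ≤ x ∧ ∀ t : ℝ, y ≠ t • x := by
    simpa [IsDiscreteElement, hx] using h
  obtain ⟨t, ht, hle, hge⟩ : ∃ t ∈ Set.Icc (0 : ℝ) 1, ¬y ≤ t • x ∧ ¬t • x ≤ y := by
    by_contra! hcover
    obtain ⟨t, -, hge, hle⟩ := isPreconnected_closed_iff.1 isPreconnected_Icc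
      {t : ℝ | t • x ≤ y} {t | y ≤ t • x}
      (isClosed_le (continuous_id.smul continuous_const) continuous_const)
      (isClosed_le continuous_const (continuous_id.smul continuous_const))
      (fun t ht ↦ or_iff_not_imp_right.2 (hcover t ht)) ⟨0, ⟨le_rfl, zero_le_one⟩, by simpa⟩
      ⟨1, ⟨zero_le_one, le_rfl⟩, by simpa⟩
    exact hy t (le_antisymm hle hge)
  refine ⟨(y - t • x)⁺, (y - t • x)⁻, ?_, ?_, ?_, ?_, posPart_inf_negPart_eq_zero _⟩
  · exact (posPart_nonneg _).lt_of_ne fun h0 ↦ hle (sub_nonpos.1 (posPart_eq_zero.1 h0.symm))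
  · exact (negPart_nonneg _).lt_of_ne fun h0 ↦ hge (sub_nonneg.1 (negPart_eq_zero.1 h0.symm))
  · exact sup_le ((sub_le_self _ (smul_nonneg ht.1 hx.le)).trans hyx) hx.le
  · refine sup_le ?_ hx.le
    rw [neg_sub]
    exact (sub_le_self _ hy0).trans (smul_le_of_le_one_left hx.le ht.2)

lemma exists_isDisjointSystem_maximal [FiniteDimensional ℝ E] :
    ∃ (n : ℕ) (e : Fin n → E), IsDisjointSystem e ∧
      ∀ e' : Fin (n + 1) → E, ¬IsDisjointSystem e' := by
  classical
  have hbound : ∀ n (e : Fin n → E), IsDisjointSystem e → n ≤ Module.finrank ℝ E :=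
    fun n e he ↦ by
      simpa using (linearIndependent_of_pairwise_inf_eq_zero he.1 he.2).fintype_card_le_finrank
  have hex : ∃ n, ¬∃ e : Fin n → E, IsDisjointSystem e :=
    ⟨Module.finrank ℝ E + 1, fun ⟨e, he⟩ ↦ by have := hbound _ e he; omega⟩
  have hspec := Nat.find_spec hex
  obtain ⟨n, hn⟩ : ∃ n, Nat.find hex = n + 1 := Nat.exists_eq_add_one_of_ne_zero fun h0 ↦
    hspec (h0 ▸ ⟨Fin.elim0, fun i ↦ i.elim0, fun i ↦ i.elim0⟩)
  rw [hn] at hspec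
  obtain ⟨e, he⟩ := not_not.1 (Nat.find_min hex (hn ▸ n.lt_add_one))
  exact ⟨n, e, he, fun e' he' ↦ hspec ⟨e', he'⟩⟩

end DisjointSystem

section FiniteDimensional

variable {E : Type*} [NormedAddCommGroup E] [Lattice E] [HasSolidNorm E] [IsOrderedAddMonoid E]
  [NormedSpace ℝ E]

/-- The coefficient is the largest `t` with `t • e ≤ x`; a positive multiple of `e` below the
remainder would allow a larger one. -/
lemma IsDiscreteElement.exists_sub_smul_inf_eq_zero {e x : E} (he : IsDiscreteElement e)
    (hx : 0 ≤ x) : ∃ t : ℝ, 0 ≤ t ∧ t • e ≤ x ∧ (x - t • e) ⊓ e = 0 := by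
  set T := {t : ℝ | t • e ≤ x}
  have h0 : (0 : ℝ) ∈ T := by simpa [T] using hx
  have hbdd : BddAbove T := by
    refine ⟨‖x‖ / ‖e‖, fun t (ht : t • e ≤ x) ↦ ?_⟩
    rcases le_or_gt t 0 with h | h
    · exact h.trans (by positivity)
    · have := HasSolidNorm.norm_le_norm_of_nonneg_of_le (smul_nonneg h.le he.1.le) ht
      rw [norm_smul, Real.norm_eq_abs, abs_of_pos h] at this
      rwa [le_div_iff₀ (norm_pos_iff.2 he.1.ne')]
  have hclosed : IsClosed T := isClosed_le (continuous_id.smul continuous_const) continuous_const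
  have htT : sSup T ∈ T := hclosed.csSup_mem ⟨0, h0⟩ hbdd
  refine ⟨sSup T, le_csSup hbdd h0, htT, ?_⟩
  have hr : 0 ≤ x - sSup T • e := sub_nonneg.2 htT
  obtain ⟨σ, hσ⟩ := he.2 _ (le_inf hr he.1.le) inf_le_right
  have hσ0 : σ ≤ 0 := by
    by_contra! hσ0
    have : sSup T + σ ∈ T := by
      change (sSup T + σ) • e ≤ x
      rw [add_smul, ← le_sub_iff_add_le', ← hσ]
      exact inf_le_left
    linarith [le_csSup hbdd this]
  exact le_antisymm (hσ ▸ smul_nonpos_of_nonpos_of_nonneg hσ0 he.1.le) (le_inf hr he.1.le)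

variable {n : ℕ} {e : Fin n → E}

lemma IsDisjointSystem.isDiscreteElement_of_maximal (he : IsDisjointSystem e)
    (hmax : ∀ e' : Fin (n + 1) → E, ¬IsDisjointSystem e') (i : Fin n) :
    IsDiscreteElement (e i) := by
  classical
  by_contra h
  obtain ⟨u, v, hu, hv, hui, hvi, huv⟩ :=
    exists_pos_inf_eq_zero_of_not_isDiscreteElement (he.1 i) h
  have hupd : IsDisjointSystem (Function.update e i u) :=
    he.of_le (fun j ↦ by rcases eq_or_ne j i with rfl | hj <;> simp [*, he.1 j])
      fun j ↦ by rcases eq_or_ne j i with rfl | hj <;> simp [*]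
  refine hv.ne' (hupd.eq_zero_of_maximal hmax hv.le fun j ↦ ?_)
  rcases eq_or_ne j i with rfl | hj
  · simpa [inf_comm] using huv
  · rw [Function.update_of_ne hj]
    exact le_antisymm ((inf_le_inf_right _ hvi).trans_eq (he.2 hj.symm))
      (le_inf hv.le (he.1 j).le)

/-- Peel off the discrete elements `e i` one at a time: the remainder stays positive and disjoint
from those already used, so at the end it vanishes by maximality. -/
lemma IsDisjointSystem.span_eq_top_of_maximal (he : IsDisjointSystem e)
    (hmax : ∀ e' : Fin (n + 1) → E, ¬IsDisjointSystem e') :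
    Submodule.span ℝ (Set.range e) = ⊤ := by
  classical
  set W := Submodule.span ℝ (Set.range e)
  have hpos : ∀ x : E, 0 ≤ x → x ∈ W := by
    intro x hx
    have key : ∀ s : Finset (Fin n), ∃ r : E, 0 ≤ r ∧ x - r ∈ W ∧ ∀ i ∈ s, r ⊓ e i = 0 := by
      intro s
      induction s using Finset.induction_on with
      | empty => exact ⟨x, hx, by simp, by simp⟩
      | insert j s hj ih =>
        obtain ⟨r, hr, hxr, hrs⟩ := ih
        obtain ⟨t, ht, hte, hre⟩ :=
          (he.isDiscreteElement_of_maximal hmax j).exists_sub_smul_inf_eq_zero hr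
        have hle : r - t • e j ≤ r := sub_le_self _ (smul_nonneg ht (he.1 j).le)
        refine ⟨r - t • e j, sub_nonneg.2 hte, ?_,
          (forall_mem_insert _ _ _).2 ⟨hre, fun i hi ↦ ?_⟩⟩
        · rw [sub_sub_eq_add_sub, add_sub_right_comm]
          exact W.add_mem hxr (W.smul_mem t (Submodule.subset_span ⟨j, rfl⟩))
        · exact le_antisymm ((inf_le_inf_right _ hle).trans_eq (hrs i hi))
            (le_inf (sub_nonneg.2 hte) (he.1 i).le)
    obtain ⟨r, hr, hxr, hre⟩ := key Finset.univ
    rwa [he.eq_zero_of_maximal hmax hr fun i ↦ hre i (Finset.mem_univ i), sub_zero] at hxr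
  refine eq_top_iff.2 fun x _ ↦ ?_
  rw [← posPart_sub_negPart x]
  exact W.sub_mem (hpos _ (posPart_nonneg x)) (hpos _ (negPart_nonneg x))

variable (E) in
theorem exists_normalized_disjoint_basis [FiniteDimensional ℝ E] :
    ∃ (n : ℕ) (B : Module.Basis (Fin n) ℝ E), (∀ i, 0 ≤ B i) ∧
      (Pairwise fun i j ↦ B i ⊓ B j = 0) ∧ ∀ i, ‖B i‖ = 1 := by
  obtain ⟨n, e, he, hmax⟩ := exists_isDisjointSystem_maximal (E := E)
  let B := Module.Basis.mk (linearIndependent_of_pairwise_inf_eq_zero he.1 he.2)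
    (he.span_eq_top_of_maximal hmax).ge
  have hunit : ∀ i, IsUnit ‖B i‖⁻¹ := fun i ↦ by simpa [B] using (he.1 i).ne'
  refine ⟨n, B.isUnitSMul hunit, fun i ↦ ?_, fun i j hij ↦ ?_, fun i ↦ ?_⟩ <;>
    simp only [Module.Basis.isUnitSMul_apply, B, Module.Basis.mk_apply]
  · exact smul_nonneg (inv_nonneg.2 (norm_nonneg _)) (he.1 i).le
  · exact smul_inf_smul_eq_zero (he.2 hij) (inv_nonneg.2 (norm_nonneg _))
      (inv_nonneg.2 (norm_nonneg _))
  · exact norm_smul_inv_norm (he.1 i).ne'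

end FiniteDimensional

lemma norm_sum_inf_sum_erase_le {F : Type*} [NormedAddCommGroup F] [Lattice F] [HasSolidNorm F]
    [IsOrderedAddMonoid F] {ι : Type*} [Fintype ι] [DecidableEq ι] {a : ι → F}
    (ha : ∀ i, 0 ≤ a i) {ε : ℝ} (hε : 0 ≤ ε)
    (h : ∀ hι : (univ : Finset ι).Nonempty, ‖∑ i, a i - univ.sup' hι a‖ ≤ ε) :
    ‖∑ i, a i ⊓ ∑ j ∈ univ.erase i, a j‖ ≤ 2 * ε := by
  rcases (univ : Finset ι).eq_empty_or_nonempty with hι | hι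
  · simp [hι, hε]
  calc ‖∑ i, a i ⊓ ∑ j ∈ univ.erase i, a j‖ ≤ ‖2 • (∑ i, a i - univ.sup' hι a)‖ :=
        HasSolidNorm.norm_le_norm_of_nonneg_of_le
          (sum_nonneg fun i _ ↦ le_inf (ha i) (sum_nonneg fun j _ ↦ ha j))
          (sum_inf_sum_erase_le_two_nsmul univ hι a fun i _ ↦ ha i)
    _ ≤ 2 * ε := by
        rw [two_nsmul]
        linarith [norm_add_le (∑ i, a i - univ.sup' hι a) (∑ i, a i - univ.sup' hι a), h hι]

theorem stmt19_general (E F : Type*)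
    [NormedAddCommGroup E] [Lattice E] [HasSolidNorm E] [IsOrderedAddMonoid E] [NormedSpace ℝ E]
    [FiniteDimensional ℝ E]
    [NormedAddCommGroup F] [Lattice F] [HasSolidNorm F] [IsOrderedAddMonoid F] [NormedSpace ℝ F]
    (ε : ℝ) (hε : 0 ≤ ε) (T : E →L[ℝ] F)
    (hpos : ∀ x : E, 0 ≤ x → 0 ≤ T x)
    (hSDP : ∀ (n : ℕ) (hn : 0 < n) (x : Fin n → E),
      (∀ i, ‖x i‖ ≤ 1) → (∀ i j, i ≠ j → |x i| ⊓ |x j| = 0) →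
      ‖(∑ i, |T (x i)|) -
          (univ : Finset (Fin n)).sup' (univ_nonempty_iff.2 (Fin.pos_iff_nonempty.1 hn))
            (fun i => |T (x i)|)‖ ≤ ε) :
    ∃ S : E →L[ℝ] F,
      (∀ x y : E, |x| ⊓ |y| = 0 → |S x| ⊓ |S y| = 0) ∧
      (∀ x : E, 0 ≤ x → 0 ≤ S x) ∧
      (∀ x : E, 0 ≤ x → S x ≤ T x) ∧
      ‖T - S‖ ≤ 2 * ε := by
  obtain ⟨d, B, hB0, hBd, hB1⟩ := exists_normalized_disjoint_basis E
  set a : Fin d → F := fun i ↦ T (B i)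
  have ha : ∀ i, 0 ≤ a i := fun i ↦ hpos _ (hB0 i)
  set b : Fin d → F := fun i ↦ ∑ j ∈ univ.erase i, a j
  set S := B.constrL fun i ↦ (a i - b i)⁺
  have hSB : ∀ i, S (B i) = (a i - b i)⁺ := B.constrL_basis _
  have hSd : Pairwise fun i j ↦ S (B i) ⊓ S (B j) = 0 := by
    simpa only [hSB] using pairwise_posPart_sub_sum_erase_inf_eq_zero ha
  have hTSB : ∀ i, (T - S) (B i) = a i ⊓ b i := fun i ↦ by
    rw [sub_apply, hSB, inf_eq_sub_posPart_sub]
  have hTS0 : ∀ i, 0 ≤ (T - S) (B i) := fun i ↦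
    hTSB i ▸ le_inf (ha i) (sum_nonneg fun j _ ↦ ha j)
  refine ⟨S, fun x y hxy ↦ ?_, fun x hx ↦ ?_, fun x hx ↦ ?_, ?_⟩
  · exact B.abs_map_inf_abs_map_eq_zero hB0 hBd S (fun i ↦ hSB i ▸ posPart_nonneg _) hSd hxy
  · exact B.map_nonneg hB0 hBd S (fun i ↦ hSB i ▸ posPart_nonneg _) hx
  · exact sub_nonneg.1 (B.map_nonneg hB0 hBd (T - S) hTS0 hx)
  have hTB : ∀ i, |T (B i)| = a i := fun i ↦ abs_of_nonneg (ha i)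
  calc ‖T - S‖ ≤ ‖∑ i, |(T - S) (B i)|‖ := B.opNorm_le_norm_sum_abs_apply hB0 hBd hB1 _
    _ = ‖∑ i, a i ⊓ b i‖ := by simp_rw [abs_of_nonneg (hTS0 _), hTSB]
    _ ≤ 2 * ε := norm_sum_inf_sum_erase_le ha hε fun hne ↦ by
        simpa only [hTB] using hSDP d (Fin.pos_iff_nonempty.2 (univ_nonempty_iff.1 hne)) B
          (fun i ↦ (hB1 i).le) fun i j hij ↦ by
            simpa only [abs_of_nonneg (hB0 _)] using hBd hij

/-- If `E` is a finite-dimensional Banach lattice and `T : E → F` is a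
positive `ε`-strongly disjointness preserving operator, then there exists a disjointness
preserving operator `S` with `0 ≤ S ≤ T` and `‖T - S‖ ≤ 2ε`. -/
theorem stmt19 (E F : Type*)
    [NormedAddCommGroup E] [Lattice E] [HasSolidNorm E] [IsOrderedAddMonoid E] [NormedSpace ℝ E] [CompleteSpace E]
    [FiniteDimensional ℝ E]
    [NormedAddCommGroup F] [Lattice F] [HasSolidNorm F] [IsOrderedAddMonoid F] [NormedSpace ℝ F] [CompleteSpace F]
    (ε : ℝ) (hε : 0 ≤ ε) (T : E →L[ℝ] F)
    (hpos : ∀ x : E, 0 ≤ x → 0 ≤ T x)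
    (hSDP : ∀ (n : ℕ) (hn : 0 < n) (x : Fin n → E),
      (∀ i, ‖x i‖ ≤ 1) → (∀ i j, i ≠ j → |x i| ⊓ |x j| = 0) →
      ‖(∑ i, |T (x i)|) -
          (univ : Finset (Fin n)).sup' (univ_nonempty_iff.2 (Fin.pos_iff_nonempty.1 hn))
            (fun i => |T (x i)|)‖ ≤ ε) :
    ∃ S : E →L[ℝ] F,
      (∀ x y : E, |x| ⊓ |y| = 0 → |S x| ⊓ |S y| = 0) ∧
      (∀ x : E, 0 ≤ x → 0 ≤ S x) ∧
      (∀ x : E, 0 ≤ x → S x ≤ T x) ∧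
      ‖T - S‖ ≤ 2 * ε :=
  stmt19_general E F ε hε T hpos hSDP
end
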